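/- arXiv:2512.04697 — 2 statements merged into one kernel-verified Lean document; each statement's English description precedes it below -/
import Mathlib

section
/- Policy improvement: Suppose the coefficients and rewards satisfy the standing assumptions and the Hölder assumption, and let (V₁^λ,…,V_m^λ) be a bounded classical solution of the exploratory HJB system. Let (V₁⁰,…,V_m⁰) be any initial guess with each V_i⁰ continuous on D̄, and for n ≥ 0 define the policy π^{n+1} by π_{ij}^{n+1}(t,x) = exp((V_j^n(t,x) − g_{ij} − V_i^n(t,x))/λ) for j ≠ i, and let (V₁^{n+1},…,V_m^{n+1}) be the bounded classical solution (each in C^{1,2}(D) ∩ C(D̄)) of the linear system ∂_t V_i^{n+1} + L^i_x V_i^{n+1} + f(·,·,i) + H_i(π_i^{n+1}, (V₁^{n+1},…,V_m^{n+1})) = 0 on D with V_i^{n+1}(T,·) = h. Then for all n ≥ 1 and all (t,x,i) ∈ D̄ × I_m, one has V_i^n(t,x) ≤ V_i^{n+1}(t,x) ≤ V_i^λ(t,x). -/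
open Filter MeasureTheory Finset Topology

noncomputable section

/-- The state space ℝⁿ, with the (sup) norm on `Fin n → ℝ`. -/
abbrev Vec (n : ℕ) := Fin n → ℝ

/-- Partial derivative in time of `φ : ℝ → Vec n → ℝ`. -/
def pderivT {n : ℕ} (φ : ℝ → Vec n → ℝ) (t : ℝ) (x : Vec n) : ℝ :=
  deriv (fun s => φ s x) t

/-- First partial derivative in the `k`-th space direction. -/
def pderivX {n : ℕ} (φ : ℝ → Vec n → ℝ) (k : Fin n) (t : ℝ) (x : Vec n) : ℝ :=
  fderiv ℝ (fun y => φ t y) x (Pi.single k 1)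

/-- Second partial derivative in the space directions `k, l`. -/
def pderivXX {n : ℕ} (φ : ℝ → Vec n → ℝ) (k l : Fin n) (t : ℝ) (x : Vec n) : ℝ :=
  fderiv ℝ (fun y => pderivX φ l t y) x (Pi.single k 1)

/-- The parabolic domain `D = [0,T) × ℝⁿ`. -/
def domD (n : ℕ) (T : ℝ) : Set (ℝ × Vec n) := Set.Ico 0 T ×ˢ Set.univ

/-- The closed parabolic domain `D̄ = [0,T] × ℝⁿ`. -/
def domDbar (n : ℕ) (T : ℝ) : Set (ℝ × Vec n) := Set.Icc 0 T ×ˢ Set.univ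

/-- `φ` is of class `C^{1,2}` on `D`: `φ`, `∂_t φ`, `D_x φ` and `D_x² φ`
exist and are continuous on `D`. -/
def IsC12On {n : ℕ} (φ : ℝ → Vec n → ℝ) (D : Set (ℝ × Vec n)) : Prop :=
  ContinuousOn (fun p => φ p.1 p.2) D ∧
  (∀ p ∈ D, DifferentiableAt ℝ (fun s => φ s p.2) p.1) ∧
  (∀ p ∈ D, ContDiffAt ℝ 2 (fun y => φ p.1 y) p.2) ∧
  ContinuousOn (fun p => pderivT φ p.1 p.2) D ∧
  (∀ k, ContinuousOn (fun p => pderivX φ k p.1 p.2) D) ∧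
  (∀ k l, ContinuousOn (fun p => pderivXX φ k l p.1 p.2) D)

/-- The second-order operator `L φ = μ·D_x φ + ½ tr(σσᵀ D_x² φ)` for given
drift `μ` and volatility `σ` (for one fixed regime). -/
def Lop {n d : ℕ} (μ : ℝ → Vec n → Vec n) (σ : ℝ → Vec n → Fin n → Fin d → ℝ)
    (φ : ℝ → Vec n → ℝ) (t : ℝ) (x : Vec n) : ℝ :=
  (∑ k, μ t x k * pderivX φ k t x) +
    (1 / 2) * ∑ k, ∑ l, (∑ a, σ t x k a * σ t x l a) * pderivXX φ k l t x

/-- The data of the optimal switching problem together with the standing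
assumptions (Assumptions 2.1 and 2.2 of the paper). -/
structure SwitchingSetting (n d m : ℕ) where
  T : ℝ
  T_pos : 0 < T
  m_ge : 2 ≤ m
  μ : ℝ → Vec n → Fin m → Vec n
  σ : ℝ → Vec n → Fin m → Fin n → Fin d → ℝ
  f : ℝ → Vec n → Fin m → ℝ
  h : Vec n → ℝ
  g : Fin m → Fin m → ℝ
  Kfh : ℝ
  /-- `μ` and `σ` are uniformly Lipschitz continuous in `x`. -/
  lip : ∃ L > 0, ∀ s ∈ Set.Icc (0 : ℝ) T, ∀ x₁ x₂ : Vec n, ∀ i,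
    ‖μ s x₁ i - μ s x₂ i‖ + ‖σ s x₁ i - σ s x₂ i‖ ≤ L * ‖x₁ - x₂‖
  /-- `μ` and `σ` have linear growth in `x`. -/
  growth : ∃ C > 0, ∀ s ∈ Set.Icc (0 : ℝ) T, ∀ x : Vec n, ∀ i,
    ‖μ s x i‖ + ‖σ s x i‖ ≤ C * (1 + ‖x‖)
  /-- Uniform ellipticity of `σσᵀ`. -/
  elliptic : ∃ σ₀ > 0, ∀ t ∈ Set.Icc (0 : ℝ) T, ∀ x : Vec n, ∀ i, ∀ ξ : Vec n,
    σ₀ * ∑ k, ξ k ^ 2 ≤ ∑ k, ∑ l, ξ k * (∑ a, σ t x i k a * σ t x i l a) * ξ l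
  /-- Continuity of the running reward. -/
  f_cont : ∀ i, ContinuousOn (fun p : ℝ × Vec n => f p.1 p.2 i) (Set.Icc (0 : ℝ) T ×ˢ Set.univ)
  /-- Continuity of the terminal reward. -/
  h_cont : Continuous h
  /-- Boundedness of the rewards: `|f| + |h| ≤ K_{f,h}`. -/
  fh_bound : ∀ t ∈ Set.Icc (0 : ℝ) T, ∀ x : Vec n, ∀ i, |f t x i| + |h x| ≤ Kfh
  /-- Positive switching costs. -/
  g_pos : ∀ i j, i ≠ j → 0 < g i j
  g_diag : ∀ i, g i i = 0
  /-- Strict triangle condition on the switching costs. -/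
  g_tri : ∀ i j k, j ≠ i → j ≠ k → g i k < g i j + g j k

/-- The switching obstacle `max_{j ≠ i} (u_j(t,x) - g_{ij})`. -/
def obstacle {n d m : ℕ} (S : SwitchingSetting n d m) (u : Fin m → ℝ → Vec n → ℝ)
    (i : Fin m) (t : ℝ) (x : Vec n) : ℝ :=
  sSup ((fun j => u j t x - S.g i j) '' {j | j ≠ i})

/-- Viscosity supersolution of the system of HJB variational inequalities. -/
def IsViscSupersolution {n d m : ℕ} (S : SwitchingSetting n d m)
    (u : Fin m → ℝ → Vec n → ℝ) : Prop :=
  (∀ i x, u i S.T x = S.h x) ∧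
  (∀ i, LowerSemicontinuousOn (fun p : ℝ × Vec n => u i p.1 p.2) (domD n S.T)) ∧
  ∀ i, ∀ p ∈ domD n S.T, ∀ φ : ℝ → Vec n → ℝ, IsC12On φ (domD n S.T) →
    IsLocalMinOn (fun q : ℝ × Vec n => u i q.1 q.2 - φ q.1 q.2) (domD n S.T) p →
    0 ≤ min (-(pderivT φ p.1 p.2) - Lop (fun t x => S.μ t x i) (fun t x => S.σ t x i) φ p.1 p.2
              - S.f p.1 p.2 i)
            (u i p.1 p.2 - obstacle S u i p.1 p.2)

/-- Viscosity subsolution of the system of HJB variational inequalities. -/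
def IsViscSubsolution {n d m : ℕ} (S : SwitchingSetting n d m)
    (u : Fin m → ℝ → Vec n → ℝ) : Prop :=
  (∀ i x, u i S.T x = S.h x) ∧
  (∀ i, UpperSemicontinuousOn (fun p : ℝ × Vec n => u i p.1 p.2) (domD n S.T)) ∧
  ∀ i, ∀ p ∈ domD n S.T, ∀ φ : ℝ → Vec n → ℝ, IsC12On φ (domD n S.T) →
    IsLocalMaxOn (fun q : ℝ × Vec n => u i q.1 q.2 - φ q.1 q.2) (domD n S.T) p →
    min (-(pderivT φ p.1 p.2) - Lop (fun t x => S.μ t x i) (fun t x => S.σ t x i) φ p.1 p.2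
          - S.f p.1 p.2 i)
        (u i p.1 p.2 - obstacle S u i p.1 p.2) ≤ 0

/-- Viscosity solution of the system of HJB variational inequalities. -/
def IsViscSolution {n d m : ℕ} (S : SwitchingSetting n d m)
    (u : Fin m → ℝ → Vec n → ℝ) : Prop :=
  IsViscSupersolution S u ∧ IsViscSubsolution S u

/-- Classical solution of the exploratory HJB system with temperature `lam`. -/
def IsClassicalSolutionExp {n d m : ℕ} (S : SwitchingSetting n d m) (lam : ℝ)
    (V : Fin m → ℝ → Vec n → ℝ) : Prop :=
  (∀ i, IsC12On (V i) (domD n S.T)) ∧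
  (∀ i, ContinuousOn (fun p : ℝ × Vec n => V i p.1 p.2) (domDbar n S.T)) ∧
  (∀ i, ∀ p ∈ domD n S.T,
    pderivT (V i) p.1 p.2
      + Lop (fun t x => S.μ t x i) (fun t x => S.σ t x i) (V i) p.1 p.2
      + S.f p.1 p.2 i
      + lam * ∑ j ∈ Finset.univ.erase i,
          Real.exp ((V j p.1 p.2 - S.g i j - V i p.1 p.2) / lam) = 0) ∧
  (∀ i x, V i S.T x = S.h x)

/-- Parabolic Hölder continuity with exponent `α` on `D` (with distance
`d(P,P') = (|t-t'| + |x-x'|²)^{1/2}`), together with boundedness. -/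
def ParabolicHolderOn {n : ℕ} (α : ℝ) (u : ℝ → Vec n → ℝ) (D : Set (ℝ × Vec n)) : Prop :=
  ∃ C, (∀ p ∈ D, |u p.1 p.2| ≤ C) ∧
    ∀ p ∈ D, ∀ q ∈ D,
      |u p.1 p.2 - u q.1 q.2| ≤ C * (|p.1 - q.1| + ‖p.2 - q.2‖ ^ 2) ^ (α / 2)

/-- Bounded Hölder continuous function on ℝⁿ with exponent `α`. -/
def HolderFn {n : ℕ} (α : ℝ) (u : Vec n → ℝ) : Prop :=
  ∃ C, (∀ x, |u x| ≤ C) ∧ ∀ x y, |u x - u y| ≤ C * ‖x - y‖ ^ α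

/-- `u ∈ C^{2+α}`: twice continuously differentiable with `u`, `D u`, `D² u`
Hölder continuous with exponent `α`. -/
def IsC2Holder {n : ℕ} (α : ℝ) (u : Vec n → ℝ) : Prop :=
  ContDiff ℝ 2 u ∧ HolderFn α u ∧
  (∀ k, HolderFn α (fun x => fderiv ℝ u x (Pi.single k 1))) ∧
  (∀ k l, HolderFn α
    (fun x => fderiv ℝ (fun y => fderiv ℝ u y (Pi.single l 1)) x (Pi.single k 1)))

/-- The Hölder assumption (Assumption 3.1): `f(·,·,i) ∈ C^α` and `h ∈ C^{2+α}`
for some `α ∈ (0,1)`. -/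
def HolderAssumption {n d m : ℕ} (S : SwitchingSetting n d m) (α : ℝ) : Prop :=
  α ∈ Set.Ioo (0 : ℝ) 1 ∧
  (∀ i, ParabolicHolderOn α (fun t x => S.f t x i) (domDbar n S.T)) ∧
  IsC2Holder α S.h

/-- The constant `K = K_{f,h} + λ max_{i} Σ_{j≠i} exp(-g_{ij}/λ)`. -/
def Kconst {n d m : ℕ} (S : SwitchingSetting n d m) (lam : ℝ) : ℝ :=
  S.Kfh + lam * sSup (Set.range fun i : Fin m =>
    ∑ j ∈ Finset.univ.erase i, Real.exp (-S.g i j / lam))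

/-- The entropy-regularized Hamiltonian
`H_i(π, y) = Σ_{j≠i} π_j (y_j - g_{ij} - y_i) + λ Σ_{j≠i} (π_j - π_j log π_j)`
(only the entries `π_j`, `j ≠ i`, are used; the convention `0 log 0 = 0` holds
since `Real.log 0 = 0`). -/
def Ham {m : ℕ} (lam : ℝ) (i : Fin m) (gi : Fin m → ℝ) (y : Fin m → ℝ)
    (π : Fin m → ℝ) : ℝ :=
  (∑ j ∈ Finset.univ.erase i, π j * (y j - gi j - y i)) +
    lam * ∑ j ∈ Finset.univ.erase i, (π j - π j * Real.log (π j))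


/-- One policy-iteration step: `(V^{n+1}, π^{n+1})` is obtained from `V^n` by
setting `π_{ij}^{n+1}(t,x) = exp((V_j^n(t,x) - g_{ij} - V_i^n(t,x))/λ)` and
letting `(V₁^{n+1},…,V_m^{n+1})` be the bounded classical solution
(`C^{1,2}(D) ∩ C(D̄)`) of the linear PDE system
`∂_t V_i^{n+1} + L^i V_i^{n+1} + f(·,·,i) + H_i(π_i^{n+1}, V^{n+1}) = 0` on `D`
with `V_i^{n+1}(T,·) = h`, starting from a continuous initial guess `V^0`. -/
def PolicyIterSeq {n d m : ℕ} (S : SwitchingSetting n d m) (lam : ℝ)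
    (V : ℕ → Fin m → ℝ → Vec n → ℝ) : Prop :=
  (∀ i, ContinuousOn (fun p : ℝ × Vec n => V 0 i p.1 p.2) (domDbar n S.T)) ∧
  ∀ N : ℕ,
    (∀ i, IsC12On (V (N + 1) i) (domD n S.T)) ∧
    (∀ i, ContinuousOn (fun p : ℝ × Vec n => V (N + 1) i p.1 p.2) (domDbar n S.T)) ∧
    (∃ C, ∀ i, ∀ p ∈ domDbar n S.T, |V (N + 1) i p.1 p.2| ≤ C) ∧
    (∀ i x, V (N + 1) i S.T x = S.h x) ∧
    (∀ i, ∀ p ∈ domD n S.T,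
      pderivT (V (N + 1) i) p.1 p.2
        + Lop (fun t x => S.μ t x i) (fun t x => S.σ t x i) (V (N + 1) i) p.1 p.2
        + S.f p.1 p.2 i
        + Ham lam i (S.g i) (fun j => V (N + 1) j p.1 p.2)
            (fun j => Real.exp ((V N j p.1 p.2 - S.g i j - V N i p.1 p.2) / lam)) = 0)

/-!
Both inequalities are instances of a comparison principle for the linear system that has the
policy `π^{n+1}` frozen in its Hamiltonian: the difference `w = W - U` of a sub- and a
supersolution satisfies `∂_t w_i + L^i w_i + Σ_{j≠i} π_ij (w_j - w_i) ≥ 0` and vanishes at `T`,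
hence `w ≤ 0`. For `V^n ≤ V^{n+1}` the inequality holds because the Gibbs policy `π^{n+1}`
maximizes `H_i(·, V^n)`; for `V^{n+1} ≤ V^λ` because
`H_i(π, y) ≤ λ Σ_{j≠i} e^{(y_j - g_ij - y_i)/λ}` for every `π ≥ 0`, with equality in the
exploratory HJB system.

The maximum principle on the unbounded domain `D̄` is proved by penalization with
`ε e^{β(T-t)}(1 + |x|²)`, a strict supersolution once `β` dominates the linear growth of `μ`
and `σ`. If `w` were positive somewhere, the penalized functions would attain a positive
maximum over `i` and `(t, x)` with `t < T`; there the coupling term is `≤ 0`, and the first- and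
second-order conditions give `∂_t w_i + L^i w_i < 0`.
-/

theorem deriv_nonpos_of_isLocalMaxOn_Ici {f : ℝ → ℝ} {a : ℝ}
    (h : IsLocalMaxOn f (Set.Ici a) a) : deriv f a ≤ 0 := by
  by_cases hf : DifferentiableAt ℝ f a
  · have h1 : (1 : ℝ) ∈ posTangentConeAt (Set.Ici a) a :=
      mem_posTangentConeAt_of_segment_subset (by simp [Set.Icc_subset_Ici_self])
    simpa using h.hasFDerivWithinAt_nonpos hf.hasFDerivAt.hasFDerivWithinAt h1
  · rw [deriv_zero_of_not_differentiableAt hf]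

theorem IsLocalMax.deriv_deriv_nonpos {f : ℝ → ℝ} {a : ℝ} (h : IsLocalMax f a)
    (hc : ContinuousAt f a) : deriv (deriv f) a ≤ 0 := by
  by_contra! hpos
  have hmin := isLocalMin_of_deriv_deriv_pos hpos h.deriv_eq_zero hc
  have hconst : f =ᶠ[𝓝 a] fun _ => f a := (hmin.and h).mono fun y hy => le_antisymm hy.2 hy.1
  have hderiv : deriv f =ᶠ[𝓝 a] fun _ => 0 := hconst.deriv.trans (by simp)
  rw [hderiv.deriv_eq, deriv_const] at hpos
  exact lt_irrefl _ hpos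

theorem IsLocalMax.fderiv_fderiv_apply_nonpos {E : Type*} [NormedAddCommGroup E]
    [NormedSpace ℝ E] {u : E → ℝ} {x : E} (h : IsLocalMax u x) (hu : ContDiffAt ℝ 2 u x)
    (v : E) : fderiv ℝ (fderiv ℝ u) x v v ≤ 0 := by
  have hline : ∀ s : ℝ, HasDerivAt (fun r : ℝ => x + r • v) v s := fun s => by
    simpa using ((hasDerivAt_id s).smul_const v).const_add x
  have hcont : Continuous fun r : ℝ => x + r • v := by fun_prop
  have hmax : IsLocalMax (fun s : ℝ => u (x + s • v)) 0 :=
    IsLocalMax.comp_continuous (by simpa using h) hcont.continuousAt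
  have hderiv :
      deriv (fun s : ℝ => u (x + s • v)) =ᶠ[𝓝 0] fun s => fderiv ℝ u (x + s • v) v := by
    have hnear : ∀ᶠ s in 𝓝 (0 : ℝ), ContDiffAt ℝ 2 u (x + s • v) :=
      hcont.continuousAt.eventually (by simpa using hu.eventually (by simp))
    filter_upwards [hnear] with s hs
    exact ((hs.differentiableAt two_ne_zero).hasFDerivAt.comp_hasDerivAt s (hline s)).deriv
  have hdiff : DifferentiableAt ℝ (fderiv ℝ u) x :=
    (hu.fderiv_right (m := 1) (by norm_num)).differentiableAt one_ne_zero
  have hsecond : HasDerivAt (fun s : ℝ => fderiv ℝ u (x + s • v) v)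
      (fderiv ℝ (fderiv ℝ u) x v v) 0 := by
    have happly : HasFDerivAt (fun y => fderiv ℝ u y v) ((fderiv ℝ (fderiv ℝ u) x).flip v)
        (x + (0 : ℝ) • v) := by
      simpa using hdiff.hasFDerivAt.clm_apply (hasFDerivAt_const v x)
    exact happly.comp_hasDerivAt (0 : ℝ) (hline 0)
  calc fderiv ℝ (fderiv ℝ u) x v v = deriv (deriv fun s : ℝ => u (x + s • v)) 0 := by
        rw [hderiv.deriv_eq, hsecond.deriv]
    _ ≤ 0 := hmax.deriv_deriv_nonpos <|
        ContinuousAt.comp (by simpa using hu.continuousAt) hcont.continuousAt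

theorem ContinuousLinearMap.apply_apply_eq_sum_sum {n : ℕ}
    (B : Vec n →L[ℝ] Vec n →L[ℝ] ℝ) (v w : Vec n) :
    B v w = ∑ k, ∑ l, v k * w l * B (Pi.single k 1) (Pi.single l 1) := by
  conv_lhs => rw [pi_eq_sum_univ' v, pi_eq_sum_univ' w]
  simp only [map_sum, map_smul, _root_.sum_apply, FunLike.coe_smul, Pi.smul_apply,
    smul_eq_mul, Finset.mul_sum]
  rw [Finset.sum_comm]
  exact Finset.sum_congr rfl fun k _ => Finset.sum_congr rfl fun l _ => by ring

theorem norm_sq_le_sum_sq {n : ℕ} (x : Vec n) : ‖x‖ ^ 2 ≤ ∑ k, x k ^ 2 := by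
  have hsq : ∀ k, x k ^ 2 ≤ ∑ k, x k ^ 2 := fun k =>
    Finset.single_le_sum (fun k _ => sq_nonneg (x k)) (Finset.mem_univ k)
  have h : ‖x‖ ≤ √(∑ k, x k ^ 2) := (pi_norm_le_iff_of_nonneg (Real.sqrt_nonneg _)).2 fun k => by
    simpa using Real.abs_le_sqrt (hsq k)
  exact (Real.le_sqrt (norm_nonneg x) (Finset.sum_nonneg fun k _ => sq_nonneg (x k))).1 h

theorem hasFDerivAt_sum_sq {n : ℕ} (x : Vec n) :
    HasFDerivAt (fun y : Vec n => ∑ k, y k ^ 2)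
      (∑ k, (2 * x k) • ContinuousLinearMap.proj (R := ℝ) (φ := fun _ : Fin n => ℝ) k) x := by
  refine HasFDerivAt.fun_sum fun k _ => ?_
  simpa using (ContinuousLinearMap.proj (R := ℝ) (φ := fun _ : Fin n => ℝ) k).hasFDerivAt.pow 2

section Linearity

variable {n : ℕ} {f g : ℝ → Vec n → ℝ} {t : ℝ} {x : Vec n}

theorem pderivT_sub (hf : DifferentiableAt ℝ (fun s => f s x) t)
    (hg : DifferentiableAt ℝ (fun s => g s x) t) :
    pderivT (fun t x => f t x - g t x) t x = pderivT f t x - pderivT g t x :=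
  deriv_sub hf hg

theorem pderivX_sub (hf : DifferentiableAt ℝ (fun y => f t y) x)
    (hg : DifferentiableAt ℝ (fun y => g t y) x) (k : Fin n) :
    pderivX (fun t x => f t x - g t x) k t x = pderivX f k t x - pderivX g k t x := by
  simp [pderivX, fderiv_fun_sub hf hg]

theorem differentiableAt_pderivX (hf : ContDiffAt ℝ 2 (fun y => f t y) x) (k : Fin n) :
    DifferentiableAt ℝ (fun y => pderivX f k t y) x :=
  ((hf.fderiv_right (m := 1) (by norm_num)).differentiableAt one_ne_zero).clm_apply
    (differentiableAt_const _)

theorem pderivXX_sub (hf : ContDiffAt ℝ 2 (fun y => f t y) x)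
    (hg : ContDiffAt ℝ 2 (fun y => g t y) x) (k l : Fin n) :
    pderivXX (fun t x => f t x - g t x) k l t x = pderivXX f k l t x - pderivXX g k l t x := by
  have hnear : (fun y => pderivX (fun t x => f t x - g t x) l t y)
      =ᶠ[𝓝 x] fun y => pderivX f l t y - pderivX g l t y := by
    filter_upwards [hf.eventually (by simp), hg.eventually (by simp)] with y hfy hgy
    exact pderivX_sub (hfy.differentiableAt two_ne_zero) (hgy.differentiableAt two_ne_zero) l
  simp only [pderivXX]
  rw [hnear.fderiv_eq, fderiv_fun_sub (differentiableAt_pderivX hf l)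
    (differentiableAt_pderivX hg l)]
  rfl

theorem Lop_sub {d : ℕ} {μ : ℝ → Vec n → Vec n} {σ : ℝ → Vec n → Fin n → Fin d → ℝ}
    (hf : ContDiffAt ℝ 2 (fun y => f t y) x) (hg : ContDiffAt ℝ 2 (fun y => g t y) x) :
    Lop μ σ (fun t x => f t x - g t x) t x = Lop μ σ f t x - Lop μ σ g t x := by
  simp only [Lop, pderivXX_sub hf hg, mul_sub, Finset.sum_sub_distrib,
    pderivX_sub (hf.differentiableAt two_ne_zero) (hg.differentiableAt two_ne_zero)]
  ring

theorem pderivXX_eq_fderiv_fderiv {φ : ℝ → Vec n → ℝ}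
    (h : DifferentiableAt ℝ (fderiv ℝ fun y => φ t y) x) (k l : Fin n) :
    pderivXX φ k l t x
      = fderiv ℝ (fderiv ℝ fun y => φ t y) x (Pi.single k 1) (Pi.single l 1) := by
  have := h.hasFDerivAt.clm_apply (hasFDerivAt_const (Pi.single l (1 : ℝ)) x)
  simp only [pderivXX, pderivX]
  rw [this.fderiv]
  simp

end Linearity

theorem Lop_nonpos_of_isLocalMax {n d : ℕ} {μ : ℝ → Vec n → Vec n}
    {σ : ℝ → Vec n → Fin n → Fin d → ℝ} {u : ℝ → Vec n → ℝ} {t : ℝ} {x : Vec n}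
    (hu : ContDiffAt ℝ 2 (fun y => u t y) x) (h : IsLocalMax (fun y => u t y) x) :
    Lop μ σ u t x ≤ 0 := by
  have hgrad : ∀ k, pderivX u k t x = 0 := fun k => by simp [pderivX, h.fderiv_eq_zero]
  have hdiff : DifferentiableAt ℝ (fderiv ℝ fun y => u t y) x :=
    (hu.fderiv_right (m := 1) (by norm_num)).differentiableAt one_ne_zero
  have hdiffusion : ∑ k, ∑ l, (∑ a, σ t x k a * σ t x l a) * pderivXX u k l t x
      = ∑ a, fderiv ℝ (fderiv ℝ fun y => u t y) x (fun k => σ t x k a)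
          (fun k => σ t x k a) := by
    simp only [pderivXX_eq_fderiv_fderiv hdiff, Finset.sum_mul]
    rw [Finset.sum_congr rfl fun a _ => ContinuousLinearMap.apply_apply_eq_sum_sum _ _ _]
    exact (Finset.sum_congr rfl fun k _ => Finset.sum_comm).trans Finset.sum_comm
  have hnonpos : ∑ a, fderiv ℝ (fderiv ℝ fun y => u t y) x (fun k => σ t x k a)
      (fun k => σ t x k a) ≤ 0 :=
    Finset.sum_nonpos fun a _ => h.fderiv_fderiv_apply_nonpos hu fun k => σ t x k a
  simp only [Lop, hgrad, mul_zero, Finset.sum_const_zero, zero_add, hdiffusion]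
  linarith

theorem pderivT_add_Lop_le_of_forall_sub_le {n d : ℕ} {μ : ℝ → Vec n → Vec n}
    {σ : ℝ → Vec n → Fin n → Fin d → ℝ} {w φ : ℝ → Vec n → ℝ} {t T : ℝ} {x : Vec n}
    (htT : t < T) (hwt : DifferentiableAt ℝ (fun s => w s x) t)
    (hφt : DifferentiableAt ℝ (fun s => φ s x) t)
    (hwx : ContDiffAt ℝ 2 (fun y => w t y) x) (hφx : ContDiffAt ℝ 2 (fun y => φ t y) x)
    (hmax : ∀ s ∈ Set.Icc t T, ∀ y, w s y - φ s y ≤ w t x - φ t x) :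
    pderivT w t x + Lop μ σ w t x ≤ pderivT φ t x + Lop μ σ φ t x := by
  have htime : pderivT (fun s y => w s y - φ s y) t x ≤ 0 :=
    deriv_nonpos_of_isLocalMaxOn_Ici <| Filter.mem_of_superset (Icc_mem_nhdsGE htT)
      fun s hs => hmax s hs x
  have hspace : Lop μ σ (fun s y => w s y - φ s y) t x ≤ 0 :=
    Lop_nonpos_of_isLocalMax (hwx.sub hφx) <|
      Filter.Eventually.of_forall fun y => hmax t (Set.left_mem_Icc.2 htT.le) y
  rw [pderivT_sub hwt hφt] at htime
  rw [Lop_sub hwx hφx] at hspace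
  linarith

def barrier {n : ℕ} (ε β T t : ℝ) (x : Vec n) : ℝ :=
  ε * (Real.exp (β * (T - t)) * (1 + ∑ k, x k ^ 2))

section Barrier

variable {n : ℕ} {ε β T t : ℝ} {x : Vec n}

theorem barrier_pos (hε : 0 < ε) : 0 < barrier ε β T t x := by
  have : 0 ≤ ∑ k, x k ^ 2 := Finset.sum_nonneg fun k _ => sq_nonneg (x k)
  unfold barrier; positivity

theorem continuous_barrier :
    Continuous fun p : ℝ × Vec n => barrier ε β T p.1 p.2 := by
  unfold barrier; fun_prop

theorem hasDerivAt_barrier :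
    HasDerivAt (fun s => barrier ε β T s x) (-β * barrier ε β T t x) t := by
  have := (((hasDerivAt_id t).const_sub T).const_mul β).exp.mul_const (1 + ∑ k, x k ^ 2)
    |>.const_mul ε
  exact this.congr_deriv (by simp only [barrier, id]; ring)

theorem contDiff_barrier : ContDiff ℝ 2 fun y : Vec n => barrier ε β T t y :=
  contDiff_const.mul <| contDiff_const.mul <| contDiff_const.add <| ContDiff.sum fun k _ =>
    (ContinuousLinearMap.proj (R := ℝ) (φ := fun _ : Fin n => ℝ) k).contDiff.pow 2

theorem pderivX_barrier (k : Fin n) :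
    pderivX (barrier ε β T) k t x = ε * Real.exp (β * (T - t)) * (2 * x k) := by
  have := (((hasFDerivAt_sum_sq x).const_add 1).const_mul (Real.exp (β * (T - t)))).const_mul ε
  simp only [pderivX, barrier]
  rw [this.fderiv]
  simp [Pi.single_apply]
  ring

theorem pderivXX_barrier (k l : Fin n) :
    pderivXX (barrier ε β T) k l t x
      = if k = l then 2 * ε * Real.exp (β * (T - t)) else 0 := by
  have hgrad : (fun y => pderivX (barrier ε β T) l t y)
      = fun y : Vec n => (2 * ε * Real.exp (β * (T - t))) * y l := by
    funext y; rw [pderivX_barrier]; ring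
  have : HasFDerivAt (fun y : Vec n => (2 * ε * Real.exp (β * (T - t))) * y l)
      ((2 * ε * Real.exp (β * (T - t))) • ContinuousLinearMap.proj l) x :=
    (ContinuousLinearMap.proj (R := ℝ) (φ := fun _ : Fin n => ℝ) l).hasFDerivAt.const_mul _
  simp only [pderivXX, hgrad]
  rw [this.fderiv]
  simp [Pi.single_apply, eq_comm]

theorem Lop_barrier {d : ℕ} {μ : ℝ → Vec n → Vec n} {σ : ℝ → Vec n → Fin n → Fin d → ℝ} :
    Lop μ σ (barrier ε β T) t x = ε * Real.exp (β * (T - t))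
      * (∑ k, μ t x k * (2 * x k) + ∑ k, ∑ a, σ t x k a ^ 2) := by
  simp only [Lop, pderivX_barrier, pderivXX_barrier, mul_ite, mul_zero, Finset.sum_ite_eq,
    Finset.mem_univ, if_true]
  rw [mul_add, Finset.mul_sum, Finset.mul_sum, Finset.mul_sum]
  congr 1
  · exact Finset.sum_congr rfl fun k _ => by ring
  · refine Finset.sum_congr rfl fun k _ => ?_
    rw [Finset.mul_sum, Finset.sum_mul, Finset.mul_sum]
    exact Finset.sum_congr rfl fun a _ => by ring

end Barrier

theorem sum_mul_two_mul_le {n : ℕ} {G : ℝ} {v x : Vec n} (hG : 0 ≤ G)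
    (hv : ‖v‖ ≤ G * (1 + ‖x‖)) : ∑ k, v k * (2 * x k) ≤ 4 * n * G * (1 + ∑ k, x k ^ 2) := by
  have hx := norm_sq_le_sum_sq x
  have hterm : ∀ k, v k * (2 * x k) ≤ 4 * G * (1 + ∑ k, x k ^ 2) := fun k => by
    have hvk : |v k| ≤ G * (1 + ‖x‖) := by simpa using (norm_le_pi_norm v k).trans hv
    have hxk : |x k| ≤ ‖x‖ := by simpa using norm_le_pi_norm x k
    calc v k * (2 * x k) ≤ 2 * (|v k| * |x k|) := by
          rw [← abs_mul]; linarith [le_abs_self (v k * x k)]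
      _ ≤ 2 * (G * (1 + ‖x‖) * ‖x‖) := by gcongr
      _ ≤ 4 * G * (1 + ∑ k, x k ^ 2) := by nlinarith [sq_nonneg (‖x‖ - 1), norm_nonneg x]
  calc ∑ k, v k * (2 * x k) ≤ ∑ _k : Fin n, 4 * G * (1 + ∑ k, x k ^ 2) :=
        Finset.sum_le_sum fun k _ => hterm k
    _ = 4 * n * G * (1 + ∑ k, x k ^ 2) := by simp; ring

theorem sum_sum_sq_le {n d : ℕ} {G : ℝ} {s : Fin n → Fin d → ℝ} {x : Vec n}
    (hs : ‖s‖ ≤ G * (1 + ‖x‖)) :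
    ∑ k, ∑ a, s k a ^ 2 ≤ 2 * n * d * G ^ 2 * (1 + ∑ k, x k ^ 2) := by
  have hx := norm_sq_le_sum_sq x
  have hterm : ∀ k a, s k a ^ 2 ≤ 2 * G ^ 2 * (1 + ∑ k, x k ^ 2) := fun k a => by
    have hska : |s k a| ≤ G * (1 + ‖x‖) := by
      simpa using ((norm_le_pi_norm (s k) a).trans (norm_le_pi_norm s k)).trans hs
    calc s k a ^ 2 = |s k a| ^ 2 := (sq_abs _).symm
      _ ≤ (G * (1 + ‖x‖)) ^ 2 := by gcongr
      _ ≤ 2 * G ^ 2 * (1 + ∑ k, x k ^ 2) := by nlinarith [sq_nonneg (‖x‖ - 1), sq_nonneg G]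
  calc ∑ k, ∑ a, s k a ^ 2 ≤ ∑ _k : Fin n, ∑ _a : Fin d, 2 * G ^ 2 * (1 + ∑ k, x k ^ 2) :=
        Finset.sum_le_sum fun k _ => Finset.sum_le_sum fun a _ => hterm k a
    _ = 2 * n * d * G ^ 2 * (1 + ∑ k, x k ^ 2) := by simp; ring

theorem pderivT_add_Lop_barrier_neg {n d : ℕ} {μ : ℝ → Vec n → Vec n}
    {σ : ℝ → Vec n → Fin n → Fin d → ℝ} {ε G T t : ℝ} {x : Vec n} (hε : 0 < ε) (hG : 0 ≤ G)
    (hgrowth : ‖μ t x‖ + ‖σ t x‖ ≤ G * (1 + ‖x‖)) :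
    pderivT (barrier ε (4 * n * G + 2 * n * d * G ^ 2 + 1) T) t x
      + Lop μ σ (barrier ε (4 * n * G + 2 * n * d * G ^ 2 + 1) T) t x < 0 := by
  have hdrift := sum_mul_two_mul_le (v := μ t x) hG (by linarith [norm_nonneg (σ t x)])
  have hdiffusion :=
    sum_sum_sq_le (s := σ t x) (G := G) (x := x) (by linarith [norm_nonneg (μ t x)])
  have hE : 0 < ε * Real.exp ((4 * n * G + 2 * n * d * G ^ 2 + 1) * (T - t)) := by positivity
  have hQ : 0 < 1 + ∑ k, x k ^ 2 := by positivity
  rw [pderivT, hasDerivAt_barrier.deriv, Lop_barrier]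
  simp only [barrier]
  nlinarith [mul_le_mul_of_nonneg_left (add_le_add hdrift hdiffusion) hE.le, mul_pos hE hQ]

theorem exists_forall_le_of_le_off_compact {ι α : Type*} [Fintype ι] [TopologicalSpace α]
    {u : ι → α → ℝ} {s K : Set α} (hK : IsCompact K) (hu : ∀ i, ContinuousOn (u i) K)
    {i₀ : ι} {p₀ : α} (hp₀ : p₀ ∈ K) (hout : ∀ i, ∀ p ∈ s, p ∉ K → u i p ≤ u i₀ p₀) :
    ∃ i, ∃ p ∈ K, ∀ j, ∀ q ∈ s, u j q ≤ u i p := by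
  choose q hqK hq using fun i => hK.exists_isMaxOn ⟨p₀, hp₀⟩ (hu i)
  obtain ⟨i, -, hi⟩ := Finset.exists_max_image Finset.univ (fun i => u i (q i))
    ⟨i₀, Finset.mem_univ _⟩
  refine ⟨i, q i, hqK i, fun j p hp => ?_⟩
  by_cases hpK : p ∈ K
  · exact (hq j hpK).trans (hi j (Finset.mem_univ _))
  · exact (hout j p hp hpK).trans ((hq i₀ hp₀).trans (hi i₀ (Finset.mem_univ _)))

theorem exists_forall_sub_barrier_le {n m : ℕ} {T ε β C : ℝ} {w : Fin m → ℝ → Vec n → ℝ}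
    (hε : 0 < ε) (hβ : 0 ≤ β)
    (hcont : ∀ i, ContinuousOn (fun p : ℝ × Vec n => w i p.1 p.2) (domDbar n T))
    (hC : ∀ i, ∀ p ∈ domDbar n T, w i p.1 p.2 ≤ C) {i₀ : Fin m} {p₀ : ℝ × Vec n}
    (hp₀ : p₀ ∈ domDbar n T) :
    ∃ i, ∃ p ∈ domDbar n T, ∀ j, ∀ q ∈ domDbar n T,
      w j q.1 q.2 - barrier ε β T q.1 q.2 ≤ w i p.1 p.2 - barrier ε β T p.1 p.2 := by
  set u : Fin m → ℝ × Vec n → ℝ := fun i p => w i p.1 p.2 - barrier ε β T p.1 p.2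
  set R := max (max 1 ‖p₀.2‖) ((C - u i₀ p₀) / ε)
  set K := Set.Icc 0 T ×ˢ Metric.closedBall (0 : Vec n) R
  have hKD : K ⊆ domDbar n T := fun p hp => ⟨hp.1, trivial⟩
  have hout : ∀ i, ∀ p ∈ domDbar n T, p ∉ K → u i p ≤ u i₀ p₀ := by
    intro i p hp hpK
    have hR : R < ‖p.2‖ := by
      by_contra! h
      exact hpK ⟨hp.1, by simpa using h⟩
    have h1 : 1 < ‖p.2‖ := lt_of_le_of_lt ((le_max_left _ _).trans (le_max_left _ _)) hR
    have h2 : (C - u i₀ p₀) / ε < ‖p.2‖ ^ 2 :=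
      ((le_max_right _ _).trans_lt hR).trans (by nlinarith)
    have h3 : ε * ‖p.2‖ ^ 2 ≤ barrier ε β T p.1 p.2 := by
      have hexp : 1 ≤ Real.exp (β * (T - p.1)) :=
        Real.one_le_exp (mul_nonneg hβ (sub_nonneg.2 hp.1.2))
      have hQ := norm_sq_le_sum_sq p.2
      unfold barrier
      gcongr
      nlinarith
    have h4 := hC i p hp
    rw [div_lt_iff₀ hε] at h2
    simp only [u]
    linarith
  obtain ⟨i, p, hpK, hmax⟩ := exists_forall_le_of_le_off_compact
    (isCompact_Icc.prod (isCompact_closedBall 0 R))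
    (fun i => ((hcont i).mono hKD).sub continuous_barrier.continuousOn)
    ⟨hp₀.1, by simp [R]⟩ hout
  exact ⟨i, p, hKD hpK, hmax⟩

theorem nonpos_of_parabolic_subsolution {n d m : ℕ} {T : ℝ}
    {μ : ℝ → Vec n → Fin m → Vec n} {σ : ℝ → Vec n → Fin m → Fin n → Fin d → ℝ}
    (hgrowth : ∃ G > 0, ∀ s ∈ Set.Icc (0 : ℝ) T, ∀ x : Vec n, ∀ i,
      ‖μ s x i‖ + ‖σ s x i‖ ≤ G * (1 + ‖x‖))
    {w : Fin m → ℝ → Vec n → ℝ} {c : Fin m → ℝ × Vec n → Fin m → ℝ}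
    (hc : ∀ i, ∀ p ∈ domD n T, ∀ j, 0 ≤ c i p j)
    (hwt : ∀ i, ∀ p ∈ domD n T, DifferentiableAt ℝ (fun s => w i s p.2) p.1)
    (hwx : ∀ i, ∀ p ∈ domD n T, ContDiffAt ℝ 2 (fun y => w i p.1 y) p.2)
    (hcont : ∀ i, ContinuousOn (fun p : ℝ × Vec n => w i p.1 p.2) (domDbar n T))
    (hbdd : ∃ C, ∀ i, ∀ p ∈ domDbar n T, w i p.1 p.2 ≤ C)
    (hterm : ∀ i x, w i T x = 0)
    (hsub : ∀ i, ∀ p ∈ domD n T,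
      0 ≤ pderivT (w i) p.1 p.2 + Lop (fun t x => μ t x i) (fun t x => σ t x i) (w i) p.1 p.2
        + ∑ j ∈ Finset.univ.erase i, c i p j * (w j p.1 p.2 - w i p.1 p.2)) :
    ∀ i, ∀ p ∈ domDbar n T, w i p.1 p.2 ≤ 0 := by
  obtain ⟨G, hG, hgrowth⟩ := hgrowth
  obtain ⟨C, hC⟩ := hbdd
  set β : ℝ := 4 * n * G + 2 * n * d * G ^ 2 + 1
  intro i₀ p₀ hp₀
  by_contra! hpos
  set ε := w i₀ p₀.1 p₀.2 / (2 * barrier 1 β T p₀.1 p₀.2)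
  have hε : 0 < ε := div_pos hpos (mul_pos two_pos (barrier_pos one_pos))
  have hu₀ : 0 < w i₀ p₀.1 p₀.2 - barrier ε β T p₀.1 p₀.2 := by
    have : barrier ε β T p₀.1 p₀.2 = w i₀ p₀.1 p₀.2 / 2 := by
      have := (barrier_pos (ε := 1) (β := β) (T := T) (t := p₀.1) (x := p₀.2) one_pos).ne'
      simp only [ε, barrier, one_mul] at this ⊢
      field_simp
    linarith
  obtain ⟨i, p, hp, hmax⟩ :=
    exists_forall_sub_barrier_le (i₀ := i₀) (β := β) hε (by positivity) hcont hC hp₀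
  have hu : 0 < w i p.1 p.2 - barrier ε β T p.1 p.2 := hu₀.trans_le (hmax i₀ p₀ hp₀)
  have hlt : p.1 < T := by
    refine hp.1.2.lt_of_ne fun hT => ?_
    rw [hT, hterm] at hu
    linarith [barrier_pos (β := β) (T := T) (t := T) (x := p.2) hε]
  have hpD : p ∈ domD n T := ⟨⟨hp.1.1, hlt⟩, trivial⟩
  have hcoupling : ∑ j ∈ Finset.univ.erase i, c i p j * (w j p.1 p.2 - w i p.1 p.2) ≤ 0 :=
    Finset.sum_nonpos fun j _ =>
      mul_nonpos_of_nonneg_of_nonpos (hc i p hpD j) (by linarith [hmax j p hp])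
  have hw := pderivT_add_Lop_le_of_forall_sub_le (μ := fun t x => μ t x i)
    (σ := fun t x => σ t x i) hlt (hwt i p hpD) hasDerivAt_barrier.differentiableAt (hwx i p hpD)
    contDiff_barrier.contDiffAt fun s hs y => hmax i (s, y) ⟨⟨hp.1.1.trans hs.1, hs.2⟩, trivial⟩
  have hbarrier := pderivT_add_Lop_barrier_neg (μ := fun t x => μ t x i)
    (σ := fun t x => σ t x i) (T := T) hε hG.le (hgrowth p.1 hp.1 p.2 i)
  linarith [hsub i p hpD]

/-- Fenchel–Young inequality for the entropy `π ↦ π - π log π`, with equality at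
`π = exp (z / lam)`. -/
theorem mul_add_entropy_le_exp {lam z π : ℝ} (hlam : 0 < lam) (hπ : 0 ≤ π) :
    π * z + lam * (π - π * Real.log π) ≤ lam * Real.exp (z / lam) := by
  rcases hπ.eq_or_lt with rfl | hπ
  · simp only [zero_mul, zero_add, Real.log_zero, mul_zero, sub_zero]
    positivity
  · have h := Real.add_one_le_exp (z / lam - Real.log π)
    rw [Real.exp_sub, Real.exp_log hπ, le_div_iff₀ hπ] at h
    have hz : π * z = lam * (π * (z / lam)) := by field_simp
    nlinarith [mul_le_mul_of_nonneg_left h hlam.le]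

section Hamiltonian

variable {m : ℕ} {lam : ℝ} (i : Fin m) (gi y : Fin m → ℝ)

theorem Ham_le_sum_exp (hlam : 0 < lam) {π : Fin m → ℝ} (hπ : ∀ j, 0 ≤ π j) :
    Ham lam i gi y π
      ≤ lam * ∑ j ∈ Finset.univ.erase i, Real.exp ((y j - gi j - y i) / lam) := by
  rw [Ham, Finset.mul_sum, Finset.mul_sum, ← Finset.sum_add_distrib]
  exact Finset.sum_le_sum fun j _ => mul_add_entropy_le_exp hlam (hπ j)

theorem Ham_gibbs (hlam : 0 < lam) :
    Ham lam i gi y (fun j => Real.exp ((y j - gi j - y i) / lam))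
      = lam * ∑ j ∈ Finset.univ.erase i, Real.exp ((y j - gi j - y i) / lam) := by
  rw [Ham, Finset.mul_sum, Finset.mul_sum, ← Finset.sum_add_distrib]
  refine Finset.sum_congr rfl fun j _ => ?_
  rw [Real.log_exp]
  field_simp
  ring

theorem Ham_sub_Ham (y' π : Fin m → ℝ) :
    Ham lam i gi y π - Ham lam i gi y' π
      = ∑ j ∈ Finset.univ.erase i, π j * ((y j - y' j) - (y i - y' i)) := by
  rw [Ham, Ham, add_sub_add_right_eq_sub, ← Finset.sum_sub_distrib]
  exact Finset.sum_congr rfl fun j _ => by ring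

end Hamiltonian

def IsBoundedC12 {m : ℕ} (n : ℕ) (T : ℝ) (U : Fin m → ℝ → Vec n → ℝ) : Prop :=
  (∀ i, IsC12On (U i) (domD n T)) ∧
  (∀ i, ContinuousOn (fun p : ℝ × Vec n => U i p.1 p.2) (domDbar n T)) ∧
  ∃ C, ∀ i, ∀ p ∈ domDbar n T, |U i p.1 p.2| ≤ C

theorem le_of_parabolic_comparison {n d m : ℕ} {T lam : ℝ}
    {μ : ℝ → Vec n → Fin m → Vec n} {σ : ℝ → Vec n → Fin m → Fin n → Fin d → ℝ}
    (hgrowth : ∃ G > 0, ∀ s ∈ Set.Icc (0 : ℝ) T, ∀ x : Vec n, ∀ i,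
      ‖μ s x i‖ + ‖σ s x i‖ ≤ G * (1 + ‖x‖))
    {g : Fin m → Fin m → ℝ} {π : Fin m → ℝ × Vec n → Fin m → ℝ}
    (hπ : ∀ i, ∀ p ∈ domD n T, ∀ j, 0 ≤ π i p j)
    {U W : Fin m → ℝ → Vec n → ℝ} (hU : IsBoundedC12 n T U) (hW : IsBoundedC12 n T W)
    (hterm : ∀ i x, W i T x = U i T x)
    (hle : ∀ i, ∀ p ∈ domD n T,
      pderivT (U i) p.1 p.2 + Lop (fun t x => μ t x i) (fun t x => σ t x i) (U i) p.1 p.2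
          + Ham lam i (g i) (fun j => U j p.1 p.2) (π i p)
        ≤ pderivT (W i) p.1 p.2 + Lop (fun t x => μ t x i) (fun t x => σ t x i) (W i) p.1 p.2
          + Ham lam i (g i) (fun j => W j p.1 p.2) (π i p)) :
    ∀ i, ∀ p ∈ domDbar n T, W i p.1 p.2 ≤ U i p.1 p.2 := by
  obtain ⟨hU12, hUcont, CU, hCU⟩ := hU
  obtain ⟨hW12, hWcont, CW, hCW⟩ := hW
  have hdiff :=
    nonpos_of_parabolic_subsolution (w := fun i t x => W i t x - U i t x) hgrowth hπ
    (fun i p hp => ((hW12 i).2.1 p hp).sub ((hU12 i).2.1 p hp))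
    (fun i p hp => ((hW12 i).2.2.1 p hp).sub ((hU12 i).2.2.1 p hp))
    (fun i => (hWcont i).sub (hUcont i))
    ⟨CW + CU, fun i p hp => by
      linarith [le_abs_self (W i p.1 p.2), neg_abs_le (U i p.1 p.2), hCW i p hp, hCU i p hp]⟩
    (fun i x => sub_eq_zero.2 (hterm i x))
    (fun i p hp => by
      rw [pderivT_sub ((hW12 i).2.1 p hp) ((hU12 i).2.1 p hp),
        Lop_sub ((hW12 i).2.2.1 p hp) ((hU12 i).2.2.1 p hp),
        ← Ham_sub_Ham i (g i) (fun j => W j p.1 p.2) (fun j => U j p.1 p.2) (π i p)]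
      linarith [hle i p hp])
  exact fun i p hp => sub_nonpos.1 (hdiff i p hp)

theorem policy_improvement_general {n d m : ℕ} (S : SwitchingSetting n d m)
    (lam : ℝ) (hlam : 0 < lam)
    (Vlam : Fin m → ℝ → Vec n → ℝ)
    (hVlam : IsClassicalSolutionExp S lam Vlam)
    (hVlam_bdd : ∃ C, ∀ i, ∀ p ∈ domDbar n S.T, |Vlam i p.1 p.2| ≤ C)
    (V : ℕ → Fin m → ℝ → Vec n → ℝ)
    (hV : PolicyIterSeq S lam V) :
    ∀ N : ℕ, 1 ≤ N → ∀ i, ∀ p ∈ domDbar n S.T,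
      V N i p.1 p.2 ≤ V (N + 1) i p.1 p.2 ∧ V (N + 1) i p.1 p.2 ≤ Vlam i p.1 p.2 := by
  intro N hN
  obtain ⟨M, rfl⟩ : ∃ M, N = M + 1 := ⟨N - 1, by omega⟩
  obtain ⟨h12, hcont, hbdd, hterm, hpde⟩ := hV.2 M
  obtain ⟨h12', hcont', hbdd', hterm', hpde'⟩ := hV.2 (M + 1)
  obtain ⟨hl12, hlcont, hlpde, hlterm⟩ := hVlam
  have hπ : ∀ i, ∀ p ∈ domD n S.T, ∀ j,
      0 ≤ Real.exp ((V (M + 1) j p.1 p.2 - S.g i j - V (M + 1) i p.1 p.2) / lam) :=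
    fun _ _ _ _ => (Real.exp_pos _).le
  have himprove : ∀ i, ∀ p ∈ domDbar n S.T, V (M + 1) i p.1 p.2 ≤ V (M + 1 + 1) i p.1 p.2 := by
    refine le_of_parabolic_comparison (lam := lam) (g := S.g) S.growth hπ ⟨h12', hcont', hbdd'⟩
      ⟨h12, hcont, hbdd⟩ (fun i x => (hterm i x).trans (hterm' i x).symm) fun i p hp => ?_
    have hgibbs := Ham_gibbs i (S.g i) (fun j => V (M + 1) j p.1 p.2) hlam
    have hle := Ham_le_sum_exp i (S.g i) (fun j => V (M + 1) j p.1 p.2) hlam fun j =>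
      (Real.exp_pos ((V M j p.1 p.2 - S.g i j - V M i p.1 p.2) / lam)).le
    beta_reduce at hgibbs hle
    linarith [hpde i p hp, hpde' i p hp]
  have hbound : ∀ i, ∀ p ∈ domDbar n S.T, V (M + 1 + 1) i p.1 p.2 ≤ Vlam i p.1 p.2 := by
    refine le_of_parabolic_comparison (lam := lam) (g := S.g) S.growth hπ
      ⟨hl12, hlcont, hVlam_bdd⟩ ⟨h12', hcont', hbdd'⟩
      (fun i x => (hterm' i x).trans (hlterm i x).symm) fun i p hp => ?_
    linarith [hpde' i p hp, hlpde i p hp,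
      Ham_le_sum_exp i (S.g i) (fun j => Vlam j p.1 p.2) hlam (hπ i p hp)]
  exact fun i p hp => ⟨himprove i p hp, hbound i p hp⟩

/-- **Policy improvement, Proposition 4.1.**
Along the policy iteration generated from any continuous initial guess,
`V_i^n ≤ V_i^{n+1} ≤ V_i^λ` on `D̄` for every `n ≥ 1` and every regime `i`,
where `(V₁^λ,…,V_m^λ)` is a bounded classical solution of the exploratory HJB
system. -/
theorem policy_improvement {n d m : ℕ} (S : SwitchingSetting n d m)
    (α : ℝ) (hα : HolderAssumption S α) (lam : ℝ) (hlam : 0 < lam)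
    (Vlam : Fin m → ℝ → Vec n → ℝ)
    (hVlam : IsClassicalSolutionExp S lam Vlam)
    (hVlam_bdd : ∃ C, ∀ i, ∀ p ∈ domDbar n S.T, |Vlam i p.1 p.2| ≤ C)
    (V : ℕ → Fin m → ℝ → Vec n → ℝ)
    (hV : PolicyIterSeq S lam V) :
    ∀ N : ℕ, 1 ≤ N → ∀ i, ∀ p ∈ domDbar n S.T,
      V N i p.1 p.2 ≤ V (N + 1) i p.1 p.2 ∧ V (N + 1) i p.1 p.2 ≤ Vlam i p.1 p.2 :=
  policy_improvement_general S lam hlam Vlam hVlam hVlam_bdd V hV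

end
end

section
/- Lipschitz stability of the entropy-regularized Hamiltonian at the exponential policy: Fix λ > 0, m ≥ 2, i ∈ I_m, real numbers g_{ij} for j ≠ i, and R > 0. For z ∈ ℝ^m define the exponential policy π(z) ∈ (0,∞)^{m−1} by π(z)_{ij} = exp((z_j − g_{ij} − z_i)/λ) for j ≠ i. Then there exists a constant C* > 0, depending only on λ, m, R and the g_{ij}, such that for all y, z ∈ ℝ^m with max_j |y_j| ≤ R and max_j |z_j| ≤ R, |H_i(π(z), y) − H_i(π(y), y)| ≤ C* max_{j∈I_m} |z_j − y_j|. -/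
noncomputable section

/-- The exponential policy `π(z)_{ij} = exp((z_j - g_{ij} - z_i)/λ)`. -/
def expPolicy {m : ℕ} (lam : ℝ) (i : Fin m) (gi : Fin m → ℝ) (z : Fin m → ℝ) :
    Fin m → ℝ :=
  fun j => Real.exp ((z j - gi j - z i) / lam)

lemma exp_lip {c x y : ℝ} (hx : x ≤ c) (hy : y ≤ c) :
    |Real.exp x - Real.exp y| ≤ Real.exp c * |x - y| := by
  wlog h : y ≤ x generalizing x y
  · rw [abs_sub_comm, abs_sub_comm x y]; exact this hy hx (le_of_not_ge h)
  rw [abs_of_nonneg (sub_nonneg.2 (Real.exp_le_exp.2 h)), abs_of_nonneg (sub_nonneg.2 h)]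
  have h1 := Real.add_one_le_exp (y - x)
  have h2 : Real.exp x ≤ Real.exp c := Real.exp_le_exp.2 hx
  have h3 : Real.exp y = Real.exp (y - x) * Real.exp x := by
    rw [← Real.exp_add]; ring_nf
  nlinarith [Real.exp_pos x, sub_nonneg.2 h]

/-- **Lipschitz stability of the entropy-regularized Hamiltonian
at the exponential policy.** For `λ > 0` and `R > 0` there is `C* > 0`
(depending only on `λ, m, R` and the `g_{ij}`) such that
`|H_i(π(z), y) - H_i(π(y), y)| ≤ C* max_j |z_j - y_j|` whenever
`max_j |y_j| ≤ R` and `max_j |z_j| ≤ R`. -/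
theorem hamiltonian_lipschitz_stability {m : ℕ} (hm : 2 ≤ m)
    (lam : ℝ) (hlam : 0 < lam) (i : Fin m) (gi : Fin m → ℝ)
    (R : ℝ) (hR : 0 < R) :
    ∃ Cstar > 0, ∀ y z : Fin m → ℝ,
      (∀ j, |y j| ≤ R) → (∀ j, |z j| ≤ R) →
      |Ham lam i gi y (expPolicy lam i gi z) - Ham lam i gi y (expPolicy lam i gi y)| ≤
        Cstar * sSup (Set.range fun j => |z j - y j|) := by
  classical
  have hmpos : 0 < m := by omega
  have hne : Nonempty (Fin m) := ⟨⟨0, hmpos⟩⟩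
  have huniv : (Finset.univ : Finset (Fin m)).Nonempty := Finset.univ_nonempty
  set G := Finset.univ.sup' huniv (fun j => |gi j|) with hGdef
  have hGle : ∀ j, |gi j| ≤ G := fun j => Finset.le_sup' (fun j => |gi j|) (Finset.mem_univ j)
  set c := (2 * R + G) / lam with hcdef
  have hG0 : 0 ≤ G := le_trans (abs_nonneg _) (hGle i)
  refine ⟨4 * m * Real.exp c, by positivity, ?_⟩
  intro y z hy hz
  set S := sSup (Set.range fun j => |z j - y j|) with hSdef
  have hSle : ∀ j, |z j - y j| ≤ S := fun j =>
    le_csSup (Set.finite_range _).bddAbove (Set.mem_range_self j)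
  have hS0 : 0 ≤ S := le_trans (abs_nonneg _) (hSle i)
  -- the per-term difference
  set d : Fin m → ℝ := fun j =>
    Real.exp ((z j - gi j - z i) / lam) * ((y j - gi j - y i) - (z j - gi j - z i))
      + lam * (Real.exp ((z j - gi j - z i) / lam) - Real.exp ((y j - gi j - y i) / lam))
    with hd
  have heq : Ham lam i gi y (expPolicy lam i gi z) - Ham lam i gi y (expPolicy lam i gi y)
      = ∑ j ∈ Finset.univ.erase i, d j := by
    simp only [Ham, expPolicy, Real.log_exp, Finset.mul_sum]
    rw [← Finset.sum_add_distrib, ← Finset.sum_add_distrib, ← Finset.sum_sub_distrib]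
    refine Finset.sum_congr rfl fun j _ => ?_
    simp only [hd]
    field_simp
    ring
  have key : ∀ j ∈ Finset.univ.erase i, |d j| ≤ 4 * Real.exp c * S := by
    intro j _
    have hzj := abs_le.1 (hz j)
    have hzi := abs_le.1 (hz i)
    have hyj := abs_le.1 (hy j)
    have hyi := abs_le.1 (hy i)
    have hgj := abs_le.1 (hGle j)
    have hac : (z j - gi j - z i) / lam ≤ c := by
      rw [hcdef]
      exact (div_le_div_iff_of_pos_right hlam).mpr (by linarith)
    have hbc : (y j - gi j - y i) / lam ≤ c := by
      rw [hcdef]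
      exact (div_le_div_iff_of_pos_right hlam).mpr (by linarith)
    have hba : |(y j - gi j - y i) - (z j - gi j - z i)| ≤ 2 * S := by
      have h1 := hSle j
      have h2 := hSle i
      have e1 : (y j - gi j - y i) - (z j - gi j - z i) = (z i - y i) - (z j - y j) := by
        ring
      rw [e1]
      calc |(z i - y i) - (z j - y j)| ≤ |z i - y i| + |z j - y j| := abs_sub _ _
        _ ≤ 2 * S := by linarith
    have hAB : |(z j - gi j - z i) / lam - (y j - gi j - y i) / lam| ≤ 2 * S / lam := by
      rw [div_sub_div_same, abs_div, abs_of_pos hlam]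
      refine (div_le_div_iff_of_pos_right hlam).mpr ?_
      rw [abs_sub_comm]
      exact hba
    have hexp :
        |Real.exp ((z j - gi j - z i) / lam) - Real.exp ((y j - gi j - y i) / lam)|
          ≤ Real.exp c * (2 * S / lam) :=
      le_trans (exp_lip hac hbc)
        (mul_le_mul_of_nonneg_left hAB (Real.exp_pos c).le)
    have hA : Real.exp ((z j - gi j - z i) / lam) ≤ Real.exp c := Real.exp_le_exp.2 hac
    calc |d j|
        ≤ |Real.exp ((z j - gi j - z i) / lam) * ((y j - gi j - y i) - (z j - gi j - z i))|
          + |lam * (Real.exp ((z j - gi j - z i) / lam)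
              - Real.exp ((y j - gi j - y i) / lam))| := abs_add_le _ _
      _ = Real.exp ((z j - gi j - z i) / lam) * |(y j - gi j - y i) - (z j - gi j - z i)|
          + lam * |Real.exp ((z j - gi j - z i) / lam)
              - Real.exp ((y j - gi j - y i) / lam)| := by
          rw [abs_mul, abs_mul, abs_of_pos (Real.exp_pos _), abs_of_pos hlam]
      _ ≤ Real.exp c * (2 * S) + lam * (Real.exp c * (2 * S / lam)) := by
          gcongr
      _ = 4 * Real.exp c * S := by
          field_simp
          ring
  calc |Ham lam i gi y (expPolicy lam i gi z) - Ham lam i gi y (expPolicy lam i gi y)|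
      = |∑ j ∈ Finset.univ.erase i, d j| := by rw [heq]
    _ ≤ ∑ j ∈ Finset.univ.erase i, |d j| := Finset.abs_sum_le_sum_abs _ _
    _ ≤ ∑ _j ∈ Finset.univ.erase i, (4 * Real.exp c * S) := Finset.sum_le_sum key
    _ = (Finset.univ.erase i).card * (4 * Real.exp c * S) := by
        rw [Finset.sum_const, nsmul_eq_mul]
    _ ≤ m * (4 * Real.exp c * S) := by
        have : ((Finset.univ.erase i).card : ℝ) ≤ m := by
          have := Finset.card_erase_le (a := i) (s := (Finset.univ : Finset (Fin m)))
          simp only [Finset.card_univ, Fintype.card_fin] at this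
          exact_mod_cast le_trans this (le_refl m)
        have hpos : 0 ≤ 4 * Real.exp c * S := by positivity
        nlinarith
    _ = 4 * m * Real.exp c * S := by ring

end
end
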